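/- Existence of a competitor. Let m ≥ 1 and S ≥ 2. Let u : ℝ^{2m} → ℝ be doubly radial, odd with respect to the Simons cone, with 0 ≤ u ≤ 1 on 𝒪, and Lipschitz on the closed ball B̄_{S+3} with Lipschitz constant μ > 0. Then there exist a constant C > 0 depending only on μ and a function w : cl(B_{S+2} ∩ 𝒪) → ℝ such that: (H1) −1 ≤ w ≤ 1; (H2) w is doubly radial and w = 0 on 𝒞 ∩ B̄_{S+2}; (H3) w = u on ∂B_{S+2} ∩ 𝒪; (H4) w ≡ −1 on B_S ∩ {x ∈ 𝒪 : μ dist(x, 𝒞) > 1}; (H5) w is Lipschitz on cl(B_{S+2} ∩ 𝒪) with Lipschitz constant depending only on μ, and |w(x) − w(y)| ≤ (C / dist(x, 𝒞)) |x − y| whenever x, y ∈ B_{S+1} ∩ 𝒪, μ dist(x, 𝒞) ≥ 1 and μ dist(y, 𝒞) ≤ 1. Here dist(x, 𝒞) = (|x'| − |x''|)/√2 for x ∈ 𝒪. -/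

import Mathlib

open MeasureTheory
open scoped ENNReal NNReal Classical

noncomputable section

/-- `ℝ^m` with the Euclidean norm. -/
abbrev E (m : ℕ) := EuclideanSpace ℝ (Fin m)

/-- `ℝ^{2m} = ℝ^m × ℝ^m`, written as pairs `x = (x', x'')`. -/
abbrev V (m : ℕ) := E m × E m

/-- The Euclidean norm of `x ∈ ℝ^{2m}`. -/
def nrm {m : ℕ} (x : V m) : ℝ := Real.sqrt (‖x.1‖ ^ 2 + ‖x.2‖ ^ 2)

/-- The Euclidean distance on `ℝ^{2m}`. -/
def distE {m : ℕ} (x y : V m) : ℝ := nrm (x - y)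

/-- The set `𝒪 = {x : |x'| > |x''|}`. -/
def OO (m : ℕ) : Set (V m) := {x | ‖x.2‖ < ‖x.1‖}

/-- The set `ℐ = {x : |x'| < |x''|}`. -/
def II (m : ℕ) : Set (V m) := {x | ‖x.1‖ < ‖x.2‖}

/-- The Simons cone `𝒞 = {x : |x'| = |x''|}`. -/
def simonsCone (m : ℕ) : Set (V m) := {x | ‖x.1‖ = ‖x.2‖}

/-- The involution `x = (x', x'') ↦ x⋆ = (x'', x')`. -/
def pstar {m : ℕ} (x : V m) : V m := (x.2, x.1)

/-- The group `O(m)² = O(m) × O(m)`. -/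
abbrev G (m : ℕ) := Matrix.orthogonalGroup (Fin m) ℝ × Matrix.orthogonalGroup (Fin m) ℝ

/-- The action of `O(m)²` on `ℝ^m × ℝ^m`: `Rx = (R₁ x', R₂ x'')`. -/
def act {m : ℕ} (R : G m) (x : V m) : V m :=
  (Matrix.toEuclideanLin (R.1 : Matrix (Fin m) (Fin m) ℝ) x.1,
   Matrix.toEuclideanLin (R.2 : Matrix (Fin m) (Fin m) ℝ) x.2)

/-- The averaged kernel `K̄(x,y) = ∫_{O(m)²} K(|Rx − y|) dR ∈ [0,+∞]`,
where `dR` is the (normalized Haar probability) measure `μ` on `O(m)²`. -/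
def Kbar {m : ℕ} [MeasurableSpace (G m)] (μ : Measure (G m)) (K : ℝ → ℝ) (x y : V m) : ℝ≥0∞ :=
  ∫⁻ R, ENNReal.ofReal (K (distE (act R x) y)) ∂μ

/-- A doubly radial function: `w(Rx) = w(x)` for all `R ∈ O(m)²`. -/
def DoublyRadial {m : ℕ} (w : V m → ℝ) : Prop := ∀ (R : G m) (x : V m), w (act R x) = w x

/-- The open Euclidean ball of radius `R` centered at the origin in `ℝ^{2m}`. -/
def ballE (m : ℕ) (R : ℝ) : Set (V m) := {x | nrm x < R}

/-- The distance to the Simons cone, for points of `𝒪`: `dist(x, 𝒞) = (|x'| - |x''|)/√2`. -/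
def distC {m : ℕ} (x : V m) : ℝ := (‖x.1‖ - ‖x.2‖) / Real.sqrt 2


/-!
The competitor interpolates, through the radial cutoff `η = clamp (|x| - (S + 1))`, between
the cone profile `v = -clamp (μ dist(x, 𝒞))` (inside `B_{S+1}`) and `u` (on `∂B_{S+2}`):
`w = (1 - η) v + η u`. Both `u` and `v` vanish on `𝒞`, because a doubly radial function that is
odd with respect to `𝒞` vanishes there: for `|x'| = |x''|`, the reflection exchanging `x'` and
`x''` acting diagonally maps `x` to `x⋆`. Every ingredient is Lipschitz (`dist(·, 𝒞)` with
constant one), and inside `B_{S+1}` the competitor is the explicit profile `v`.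
-/

open Matrix Set

variable {m : ℕ}

lemma nrm_eq_norm_toLp (x : V m) : nrm x = ‖WithLp.toLp 2 x‖ := by
  rw [WithLp.prod_norm_eq_of_L2]; rfl

lemma distE_nonneg (x y : V m) : 0 ≤ distE x y := Real.sqrt_nonneg _

lemma continuous_nrm : Continuous (nrm : V m → ℝ) := by
  unfold nrm; fun_prop

lemma abs_nrm_sub_nrm_le (x y : V m) : |nrm x - nrm y| ≤ distE x y := by
  simp only [distE, nrm_eq_norm_toLp, WithLp.toLp_sub]
  exact abs_norm_sub_norm_le _ _

lemma abs_distC_sub_distC_le (x y : V m) : |distC x - distC y| ≤ distE x y := by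
  set a := ‖x.1 - y.1‖
  set b := ‖x.2 - y.2‖
  have hsum : a + b ≤ Real.sqrt 2 * distE x y := by
    rw [show distE x y = Real.sqrt (a ^ 2 + b ^ 2) from rfl, ← Real.sqrt_mul zero_le_two]
    refine Real.le_sqrt_of_sq_le ?_
    nlinarith [sq_nonneg (a - b)]
  have h1 : |‖x.1‖ - ‖y.1‖| ≤ a := abs_norm_sub_norm_le _ _
  have h2 : |‖x.2‖ - ‖y.2‖| ≤ b := abs_norm_sub_norm_le _ _
  have hs2 : 0 < Real.sqrt 2 := by positivity
  rw [distC, distC, div_sub_div_same, abs_div, abs_of_pos hs2, div_le_iff₀' hs2]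
  calc |‖x.1‖ - ‖x.2‖ - (‖y.1‖ - ‖y.2‖)|
      = |(‖x.1‖ - ‖y.1‖) - (‖x.2‖ - ‖y.2‖)| := by ring_nf
    _ ≤ |‖x.1‖ - ‖y.1‖| + |‖x.2‖ - ‖y.2‖| := abs_sub _ _
    _ ≤ Real.sqrt 2 * distE x y := by linarith

lemma closure_ballE_inter_OO_subset (R : ℝ) :
    closure (ballE m R ∩ OO m) ⊆ {x | nrm x ≤ R ∧ ‖x.2‖ ≤ ‖x.1‖} :=
  closure_minimal (fun _ hx => ⟨hx.1.le, hx.2.le⟩)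
    ((isClosed_le continuous_nrm continuous_const).inter
      (isClosed_le continuous_snd.norm continuous_fst.norm))

lemma norm_toEuclideanLin_of_mem_orthogonalGroup {A : Matrix (Fin m) (Fin m) ℝ}
    (hA : A ∈ orthogonalGroup (Fin m) ℝ) (v : E m) : ‖toEuclideanLin A v‖ = ‖v‖ := by
  rw [← coe_toEuclideanCLM_eq_toEuclideanLin]
  exact ContinuousLinearMap.norm_map_of_mem_unitary (Unitary.map_mem toEuclideanCLM hA) v

lemma exists_orthogonalGroup_toEuclideanLin_eq (f : E m ≃ₗᵢ[ℝ] E m) :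
    ∃ A : orthogonalGroup (Fin m) ℝ, ∀ v, toEuclideanLin (A : Matrix (Fin m) (Fin m) ℝ) v = f v := by
  let U := Unitary.linearIsometryEquiv.symm f
  refine ⟨⟨(toEuclideanCLM (n := Fin m) (𝕜 := ℝ)).symm U,
    Unitary.map_mem (R := E m →L[ℝ] E m) (S := Matrix (Fin m) (Fin m) ℝ)
      (toEuclideanCLM (n := Fin m) (𝕜 := ℝ)).symm U.2⟩, fun v => ?_⟩
  rw [← coe_toEuclideanCLM_eq_toEuclideanLin]
  simp [U, Unitary.coe_symm_linearIsometryEquiv_apply]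

lemma norm_act_fst (R : G m) (x : V m) : ‖(act R x).1‖ = ‖x.1‖ :=
  norm_toEuclideanLin_of_mem_orthogonalGroup R.1.2 x.1

lemma norm_act_snd (R : G m) (x : V m) : ‖(act R x).2‖ = ‖x.2‖ :=
  norm_toEuclideanLin_of_mem_orthogonalGroup R.2.2 x.2

lemma nrm_act (R : G m) (x : V m) : nrm (act R x) = nrm x := by
  rw [nrm, nrm, norm_act_fst, norm_act_snd]

lemma distC_act (R : G m) (x : V m) : distC (act R x) = distC x := by
  rw [distC, distC, norm_act_fst, norm_act_snd]

lemma exists_act_eq_pstar {x : V m} (hx : x ∈ simonsCone m) : ∃ R : G m, act R x = pstar x := by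
  have hx : ‖x.1‖ = ‖x.2‖ := hx
  set f := (ℝ ∙ (x.1 - x.2))ᗮ.reflection
  have h1 : f x.1 = x.2 := Submodule.reflection_sub hx
  have h2 : f x.2 = x.1 := by rw [← h1]; exact Submodule.reflection_reflection _ x.1
  obtain ⟨A, hA⟩ := exists_orthogonalGroup_toEuclideanLin_eq f
  exact ⟨(A, A), Prod.ext ((hA _).trans h1) ((hA _).trans h2)⟩

lemma DoublyRadial.eq_zero_of_mem_simonsCone {u : V m → ℝ} (hrad : DoublyRadial u)
    (hodd : ∀ x, u (pstar x) = -u x) {x : V m} (hx : x ∈ simonsCone m) : u x = 0 := by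
  obtain ⟨R, hR⟩ := exists_act_eq_pstar hx
  have := hrad R x
  rw [hR, hodd] at this
  linarith

abbrev clamp01 (t : ℝ) : ℝ := projIcc 0 1 zero_le_one t

lemma clamp01_mem (t : ℝ) : clamp01 t ∈ Icc 0 1 := (projIcc 0 1 zero_le_one t).2

lemma abs_clamp01_sub_clamp01_le (s t : ℝ) : |clamp01 s - clamp01 t| ≤ |s - t| :=
  abs_projIcc_sub_projIcc zero_le_one

lemma clamp01_of_nonpos {t : ℝ} (ht : t ≤ 0) : clamp01 t = 0 := by
  simp [clamp01, projIcc_of_le_left _ ht]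

lemma clamp01_of_one_le {t : ℝ} (ht : 1 ≤ t) : clamp01 t = 1 := by
  simp [clamp01, projIcc_of_right_le _ ht]

lemma clamp01_of_mem {t : ℝ} (ht : t ∈ Icc 0 1) : clamp01 t = t := by
  simp [clamp01, projIcc_of_mem _ ht]

def radialCutoff (S : ℝ) (x : V m) : ℝ := clamp01 (nrm x - (S + 1))

def coneProfile (μ : ℝ) (x : V m) : ℝ := -clamp01 (μ * distC x)

def competitor (μ S : ℝ) (u : V m → ℝ) (x : V m) : ℝ :=
  (1 - radialCutoff S x) * coneProfile μ x + radialCutoff S x * u x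

lemma radialCutoff_mem (S : ℝ) (x : V m) : radialCutoff S x ∈ Icc 0 1 := clamp01_mem _

lemma coneProfile_mem (μ : ℝ) (x : V m) : coneProfile μ x ∈ Icc (-1) 0 := by
  obtain ⟨h0, h1⟩ := clamp01_mem (μ * distC x)
  exact ⟨by simp only [coneProfile]; linarith, by simp only [coneProfile]; linarith⟩

lemma abs_radialCutoff_sub_le (S : ℝ) (x y : V m) :
    |radialCutoff S x - radialCutoff S y| ≤ distE x y :=
  (abs_clamp01_sub_clamp01_le _ _).trans <| by
    simpa only [sub_sub_sub_cancel_right] using abs_nrm_sub_nrm_le x y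

lemma abs_coneProfile_sub_le {μ : ℝ} (hμ : 0 ≤ μ) (x y : V m) :
    |coneProfile μ x - coneProfile μ y| ≤ μ * distE x y := by
  rw [coneProfile, coneProfile, neg_sub_neg, abs_sub_comm]
  refine (abs_clamp01_sub_clamp01_le _ _).trans ?_
  rw [← mul_sub, abs_mul, abs_of_nonneg hμ]
  exact mul_le_mul_of_nonneg_left (abs_distC_sub_distC_le x y) hμ

lemma radialCutoff_of_nrm_le {S : ℝ} {x : V m} (hx : nrm x ≤ S + 1) : radialCutoff S x = 0 :=
  clamp01_of_nonpos (by linarith)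

lemma radialCutoff_of_le_nrm {S : ℝ} {x : V m} (hx : S + 2 ≤ nrm x) : radialCutoff S x = 1 :=
  clamp01_of_one_le (by linarith)

lemma competitor_of_nrm_le {μ S : ℝ} {u : V m → ℝ} {x : V m} (hx : nrm x ≤ S + 1) :
    competitor μ S u x = coneProfile μ x := by
  simp [competitor, radialCutoff_of_nrm_le hx]

lemma competitor_act (μ S : ℝ) {u : V m → ℝ} (hrad : DoublyRadial u) (R : G m) (x : V m) :
    competitor μ S u (act R x) = competitor μ S u x := by
  simp only [competitor, radialCutoff, coneProfile, nrm_act, distC_act, hrad R x]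

lemma abs_lerp_sub_lerp_le {s t a b c d δ L M : ℝ} (hs : s ∈ Icc 0 1) (hst : |s - t| ≤ δ)
    (hab : |a - b| ≤ L * δ) (hcd : |c - d| ≤ L * δ) (hbd : |d - b| ≤ M) :
    |((1 - s) * a + s * c) - ((1 - t) * b + t * d)| ≤ (L + M) * δ := by
  have h1 : |(1 - s) * (a - b)| ≤ (1 - s) * (L * δ) := by
    rw [abs_mul, abs_of_nonneg (by linarith [hs.2])]
    exact mul_le_mul_of_nonneg_left hab (by linarith [hs.2])
  have h2 : |s * (c - d)| ≤ s * (L * δ) := by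
    rw [abs_mul, abs_of_nonneg hs.1]
    exact mul_le_mul_of_nonneg_left hcd hs.1
  have h3 : |(s - t) * (d - b)| ≤ δ * M := by
    rw [abs_mul]
    exact mul_le_mul hst hbd (abs_nonneg _) ((abs_nonneg _).trans hst)
  calc |((1 - s) * a + s * c) - ((1 - t) * b + t * d)|
      = |(1 - s) * (a - b) + s * (c - d) + (s - t) * (d - b)| := by ring_nf
    _ ≤ |(1 - s) * (a - b)| + |s * (c - d)| + |(s - t) * (d - b)| := abs_add_three _ _ _
    _ ≤ (L + M) * δ := by nlinarith

-- With `t = μ a ≥ 1` and `s = μ b ≤ 1`: `(1 - s) t ≤ 2 (t - s)` since `t (1 + s) ≥ 1 + s`.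
lemma one_sub_mul_le_two_div_mul {μ a b δ : ℝ} (hμ : 0 < μ) (hb : 0 ≤ b) (ha : 1 ≤ μ * a)
    (hb1 : μ * b ≤ 1) (hab : a - b ≤ δ) : 1 - μ * b ≤ 2 / a * δ := by
  have ha0 : 0 < a := by nlinarith
  rw [div_mul_eq_mul_div, le_div_iff₀ ha0]
  nlinarith [mul_le_mul_of_nonneg_left hab hμ.le, mul_nonneg hμ.le hb]

lemma distC_pos {x : V m} (hx : x ∈ OO m) : 0 < distC x :=
  div_pos (sub_pos.mpr hx) (by positivity)

lemma competitor_mem_Icc (μ S : ℝ) {u : V m → ℝ} {x : V m} (hu : u x ∈ Icc 0 1) :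
    competitor μ S u x ∈ Icc (-1) 1 := by
  have hv := coneProfile_mem μ x
  have hη := radialCutoff_mem S x
  exact convex_Icc (-1 : ℝ) 1 ⟨hv.1, hv.2.trans zero_le_one⟩ ⟨by linarith [hu.1], hu.2⟩
    (by linarith [hη.2]) hη.1 (by ring)

lemma abs_competitor_sub_le {μ S : ℝ} (hμ : 0 ≤ μ) {u : V m → ℝ} {x y : V m}
    (hu : |u x - u y| ≤ μ * distE x y) (huy : u y ∈ Icc 0 1) :
    |competitor μ S u x - competitor μ S u y| ≤ (μ + 2) * distE x y := by
  have hvy := coneProfile_mem μ y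
  refine abs_lerp_sub_lerp_le (radialCutoff_mem S x) (abs_radialCutoff_sub_le S x y)
    (abs_coneProfile_sub_le hμ x y) hu ?_
  rw [abs_le]; constructor <;> linarith [hvy.1, hvy.2, huy.1, huy.2]

lemma abs_competitor_sub_le_of_near_cone {μ S : ℝ} (hμ : 0 < μ) {u : V m → ℝ} {x y : V m}
    (hyO : y ∈ OO m) (hx : nrm x ≤ S + 1) (hy : nrm y ≤ S + 1) (hdx : 1 ≤ μ * distC x)
    (hdy : μ * distC y ≤ 1) :
    |competitor μ S u x - competitor μ S u y| ≤ 2 / distC x * distE x y := by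
  have hy0 := distC_pos hyO
  rw [competitor_of_nrm_le hx, competitor_of_nrm_le hy, coneProfile, coneProfile,
    clamp01_of_one_le hdx, clamp01_of_mem ⟨by positivity, hdy⟩, neg_sub_neg, abs_sub_comm,
    abs_of_nonneg (by linarith)]
  exact one_sub_mul_le_two_div_mul hμ hy0.le hdx hdy
    ((le_abs_self _).trans (abs_distC_sub_distC_le x y))

theorem statement_15_general (m : ℕ) (μc : ℝ) (hμc : 0 < μc) :
    ∃ C : ℝ, 0 < C ∧
      ∀ S : ℝ, 2 ≤ S →
      ∀ u : V m → ℝ, DoublyRadial u → (∀ x, u (pstar x) = - u x) →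
        (∀ x ∈ OO m, 0 ≤ u x ∧ u x ≤ 1) →
        (∀ x y : V m, nrm x ≤ S + 3 → nrm y ≤ S + 3 → |u x - u y| ≤ μc * distE x y) →
      ∃ w : V m → ℝ,
        -- (H1)
        (∀ x ∈ closure (ballE m (S + 2) ∩ OO m), -1 ≤ w x ∧ w x ≤ 1) ∧
        -- (H2)
        (∀ (R : G m), ∀ x ∈ closure (ballE m (S + 2) ∩ OO m), w (act R x) = w x) ∧
        (∀ x ∈ simonsCone m, nrm x ≤ S + 2 → w x = 0) ∧
        -- (H3)
        (∀ x ∈ OO m, nrm x = S + 2 → w x = u x) ∧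
        -- (H4)
        (∀ x ∈ OO m, nrm x < S → 1 < μc * distC x → w x = -1) ∧
        -- (H5)
        (∀ x ∈ closure (ballE m (S + 2) ∩ OO m), ∀ y ∈ closure (ballE m (S + 2) ∩ OO m),
          |w x - w y| ≤ C * distE x y) ∧
        (∀ x y : V m, x ∈ OO m → y ∈ OO m → nrm x < S + 1 → nrm y < S + 1 →
          1 ≤ μc * distC x → μc * distC y ≤ 1 →
          |w x - w y| ≤ C / distC x * distE x y) := by
  refine ⟨μc + 2, by linarith, fun S _ u hrad hodd hu01 hulip => ⟨competitor μc S u, ?_⟩⟩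
  have hu_mem : ∀ x : V m, ‖x.2‖ ≤ ‖x.1‖ → u x ∈ Icc 0 1 := fun x hx =>
    hx.lt_or_eq.elim (fun h => hu01 x h)
      fun h => by rw [hrad.eq_zero_of_mem_simonsCone hodd h.symm]; simp
  refine ⟨fun x hx => competitor_mem_Icc μc S (hu_mem x (closure_ballE_inter_OO_subset _ hx).2),
    fun R x _ => competitor_act μc S hrad R x, fun x hx _ => ?_, fun x _ hx => ?_,
    fun x _ hx hd => ?_, fun x hx y hy => ?_, fun x y hxO hyO hx hy hdx hdy => ?_⟩
  · have hd : distC x = 0 := by rw [distC, show ‖x.1‖ = ‖x.2‖ from hx, sub_self, zero_div]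
    simp [competitor, coneProfile, hd, clamp01_of_nonpos, hrad.eq_zero_of_mem_simonsCone hodd hx]
  · simp [competitor, radialCutoff_of_le_nrm hx.ge]
  · rw [competitor_of_nrm_le (by linarith), coneProfile, clamp01_of_one_le hd.le]
  · obtain ⟨hxS, -⟩ := closure_ballE_inter_OO_subset _ hx
    obtain ⟨hyS, hy2⟩ := closure_ballE_inter_OO_subset _ hy
    exact abs_competitor_sub_le hμc.le (hulip x y (by linarith) (by linarith)) (hu_mem y hy2)
  · calc |competitor μc S u x - competitor μc S u y| ≤ 2 / distC x * distE x y :=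
          abs_competitor_sub_le_of_near_cone hμc hyO hx.le hy.le hdx hdy
      _ ≤ (μc + 2) / distC x * distE x y := by
          gcongr
          · exact distE_nonneg x y
          · exact (distC_pos hxO).le
          · linarith

/-- Existence of a competitor `w` on `cl(B_{S+2} ∩ 𝒪)` satisfying (H1)–(H5),
with constants depending only on the Lipschitz constant `μ` of `u` on `B̄_{S+3}`. -/
theorem statement_15 (m : ℕ) (hm : 1 ≤ m) (μc : ℝ) (hμc : 0 < μc) :
    ∃ C : ℝ, 0 < C ∧
      ∀ S : ℝ, 2 ≤ S →
      ∀ u : V m → ℝ, DoublyRadial u → (∀ x, u (pstar x) = - u x) →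
        (∀ x ∈ OO m, 0 ≤ u x ∧ u x ≤ 1) →
        (∀ x y : V m, nrm x ≤ S + 3 → nrm y ≤ S + 3 → |u x - u y| ≤ μc * distE x y) →
      ∃ w : V m → ℝ,
        -- (H1)
        (∀ x ∈ closure (ballE m (S + 2) ∩ OO m), -1 ≤ w x ∧ w x ≤ 1) ∧
        -- (H2)
        (∀ (R : G m), ∀ x ∈ closure (ballE m (S + 2) ∩ OO m), w (act R x) = w x) ∧
        (∀ x ∈ simonsCone m, nrm x ≤ S + 2 → w x = 0) ∧
        -- (H3)
        (∀ x ∈ OO m, nrm x = S + 2 → w x = u x) ∧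
        -- (H4)
        (∀ x ∈ OO m, nrm x < S → 1 < μc * distC x → w x = -1) ∧
        -- (H5)
        (∀ x ∈ closure (ballE m (S + 2) ∩ OO m), ∀ y ∈ closure (ballE m (S + 2) ∩ OO m),
          |w x - w y| ≤ C * distE x y) ∧
        (∀ x y : V m, x ∈ OO m → y ∈ OO m → nrm x < S + 1 → nrm y < S + 1 →
          1 ≤ μc * distC x → μc * distC y ≤ 1 →
          |w x - w y| ≤ C / distC x * distE x y) :=
  statement_15_general m μc hμc
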